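/- For every nonzero real z with |z| < π, Σ_{n≥1} ( ∫_{-1}^{1} T_{2n-1}(x) dx ) · z^{2n-1}/(2n-1)! = 4 · Σ_{n≥1} n · (2^{2n} B_{2n}/(2n)!) · z^{2n-1}, where T_n are the polynomials defined by T_0(x) = x and T_n(x) = (1 - x²)·T_{n-1}'(x); consequently ∫_{-1}^{1} T_{2n-1}(x) dx = 2^{2n+1} B_{2n} for every n ≥ 1. -/

import Mathlib

/-!
Let `F(x, z) = ∑ Tₙ(x) zⁿ / n!`. The recurrence says `∂_z F = (1 - x²) ∂_x F` with
`F(x, 0) = x`, and this transport equation forces `F = (x + tanh z) / (1 + x tanh z)`.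
Integrating `F · (1 + x tanh z) = x + tanh z` over `[-1, 1]`, and using
`∫ (1 - x²) ∂_x F = 2 ∫ x F` (integration by parts), the series `G(z) = ∫₋₁¹ F(x, z) dx`
satisfies `z G' + 2 (z coth z) G = 4 z`. This singular equation has a unique power-series
solution, and `2 (z coth z)'` is one; since `z coth z = z + ∑ 2ⁿ Bₙ zⁿ / n!`, comparing
coefficients gives `∫₋₁¹ Tₙ = 2ⁿ⁺² Bₙ₊₁` for `n ≥ 1`.
-/

open Polynomial Real MeasureTheory

noncomputable def T : ℕ → Polynomial ℚ
  | 0 => Polynomial.X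
  | n + 1 => (1 - Polynomial.X ^ 2) * Polynomial.derivative (T n)

open scoped PowerSeries

noncomputable section

theorem PowerSeries.derivative_map {R S : Type*} [CommSemiring R] [CommSemiring S] (f : R →+* S)
    (φ : R⟦X⟧) : d⁄dX S (PowerSeries.map f φ) = PowerSeries.map f (d⁄dX R φ) := by
  ext n : 1
  simp [PowerSeries.coeff_derivative]

section DerivativeCoeffwise

variable {R : Type*} [CommSemiring R]

variable (R) in
/-- `∂/∂x` on `R[x]⟦z⟧`: the polynomial coefficients are differentiated. -/
def derivativeCoeffwise : Derivation R R[X]⟦X⟧ R[X]⟦X⟧ where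
  toFun f := PowerSeries.mk fun n => derivative (PowerSeries.coeff n f)
  map_add' f g := by ext n : 1; simp
  map_smul' r f := by ext n : 1; simp
  map_one_eq_zero' := by ext n : 1; simp [PowerSeries.coeff_one, apply_ite]
  leibniz' f g := by
    ext n : 1
    rw [smul_eq_mul, smul_eq_mul, mul_comm g]
    simp only [LinearMap.coe_mk, AddHom.coe_mk, PowerSeries.coeff_mk, map_add,
      PowerSeries.coeff_mul, derivative_sum, derivative_mul, Finset.sum_add_distrib, add_comm]

@[simp]
theorem coeff_derivativeCoeffwise (f : R[X]⟦X⟧) (n : ℕ) :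
    PowerSeries.coeff n (derivativeCoeffwise R f) = derivative (PowerSeries.coeff n f) := by
  simp [derivativeCoeffwise]

theorem derivativeCoeffwise_C (p : R[X]) :
    derivativeCoeffwise R (PowerSeries.C p) = PowerSeries.C (derivative p) := by
  ext n : 1
  by_cases hn : n = 0 <;> simp [PowerSeries.coeff_C, hn]

theorem derivativeCoeffwise_map_algebraMap (f : R⟦X⟧) :
    derivativeCoeffwise R (PowerSeries.map (algebraMap R R[X]) f) = 0 := by
  ext n : 1
  simp

end DerivativeCoeffwise

section Coeffwise

variable {R S : Type*} [CommSemiring R] [CommSemiring S] [Algebra R S] (φ : S →ₗ[R] R)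

def coeffwise : S⟦X⟧ →ₗ[R] R⟦X⟧ where
  toFun f := PowerSeries.mk fun n => φ (PowerSeries.coeff n f)
  map_add' f g := by ext n : 1; simp
  map_smul' r f := by ext n : 1; simp

@[simp]
theorem coeff_coeffwise (f : S⟦X⟧) (n : ℕ) :
    PowerSeries.coeff n (coeffwise φ f) = φ (PowerSeries.coeff n f) := by
  simp [coeffwise]

theorem coeffwise_C (s : S) : coeffwise φ (PowerSeries.C s) = PowerSeries.C (φ s) := by
  ext n : 1
  by_cases hn : n = 0 <;> simp [PowerSeries.coeff_C, hn]

theorem coeffwise_map_mul (b : R⟦X⟧) (f : S⟦X⟧) :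
    coeffwise φ (PowerSeries.map (algebraMap R S) b * f) = b * coeffwise φ f := by
  ext n : 1
  simp [PowerSeries.coeff_mul, ← Algebra.smul_def]

theorem coeffwise_derivative (f : S⟦X⟧) :
    coeffwise φ (d⁄dX S f) = d⁄dX R (coeffwise φ f) := by
  ext n : 1
  simp only [coeff_coeffwise, PowerSeries.coeff_derivative]
  rw [← Nat.cast_add_one, ← Nat.cast_add_one, ← nsmul_eq_mul', ← nsmul_eq_mul', map_nsmul]

end Coeffwise

theorem coeff_X_mul_derivative {R : Type*} [CommSemiring R] (f : R⟦X⟧) (n : ℕ) :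
    PowerSeries.coeff n (PowerSeries.X * d⁄dX R f) = n * PowerSeries.coeff n f := by
  rcases n with _ | n
  · simp
  · rw [PowerSeries.coeff_succ_X_mul, PowerSeries.coeff_derivative, mul_comm]
    push_cast
    rfl

theorem eq_zero_of_X_mul_derivative_add_mul_eq_zero {R : Type*} [CommRing R] [NoZeroDivisors R]
    {a f : R⟦X⟧} (ha : ∀ n : ℕ, (n : R) + PowerSeries.constantCoeff a ≠ 0)
    (h : PowerSeries.X * d⁄dX R f + a * f = 0) : f = 0 := by
  ext n : 1
  rw [map_zero]
  induction n using Nat.strong_induction_on with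
  | _ n ih =>
    have hn := congrArg (PowerSeries.coeff n) h
    rw [map_add, coeff_X_mul_derivative, PowerSeries.coeff_mul,
      Finset.sum_eq_single_of_mem (0, n) (by simp), map_zero] at hn
    · refine (mul_eq_zero.mp ?_).resolve_left (ha n)
      rw [← hn, PowerSeries.coeff_zero_eq_constantCoeff_apply]
      ring
    · rintro ⟨i, j⟩ hij hne
      rw [Finset.HasAntidiagonal.mem_antidiagonal] at hij
      rw [ih j (by grind), mul_zero]

theorem eq_zero_of_derivative_eq_transport {R : Type*} [CommRing R] [IsDomain R] [CharZero R]
    {q : R[X]} {A f : R[X]⟦X⟧}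
    (hf : d⁄dX R[X] f = PowerSeries.C q * derivativeCoeffwise R f + A * f)
    (h0 : PowerSeries.constantCoeff f = 0) : f = 0 := by
  ext n : 1
  rw [map_zero]
  induction n using Nat.strong_induction_on with
  | _ n ih =>
    rcases n with _ | n
    · simpa using h0
    have hn := congrArg (PowerSeries.coeff n) hf
    rw [PowerSeries.coeff_derivative, map_add, PowerSeries.coeff_C_mul,
      coeff_derivativeCoeffwise, ih n n.lt_succ_self, derivative_zero, mul_zero, zero_add,
      PowerSeries.coeff_mul, Finset.sum_eq_zero] at hn
    · exact (mul_eq_zero.mp hn).resolve_right (Nat.cast_add_one_ne_zero n)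
    · rintro ⟨i, j⟩ hij
      rw [Finset.HasAntidiagonal.mem_antidiagonal] at hij
      rw [ih j (by omega), mul_zero]

section CothSeries

variable (K : Type*) [Field K] [CharZero K]

/-- `z coth z = z + 2z / (e^{2z} - 1)`. -/
def zCothSeries : K⟦X⟧ := PowerSeries.X + PowerSeries.rescale 2 (bernoulliPowerSeries K)

def tanhSeries : K⟦X⟧ := PowerSeries.X * (zCothSeries K)⁻¹

variable {K}

theorem constantCoeff_zCothSeries : PowerSeries.constantCoeff (zCothSeries K) = 1 := by
  rw [← PowerSeries.coeff_zero_eq_constantCoeff_apply, zCothSeries, map_add,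
    PowerSeries.coeff_rescale]
  simp [bernoulliPowerSeries]

theorem coeff_zCothSeries_add_two (n : ℕ) :
    PowerSeries.coeff (n + 2) (zCothSeries K) =
      2 ^ (n + 2) * (bernoulli (n + 2) : K) / (n + 2).factorial := by
  simp [zCothSeries, bernoulliPowerSeries, PowerSeries.coeff_X, mul_div_assoc]

theorem zCothSeries_mul_exp_sq_sub_one :
    zCothSeries K * (PowerSeries.exp K ^ 2 - 1) =
      PowerSeries.X * (PowerSeries.exp K ^ 2 + 1) := by
  have h := congrArg (PowerSeries.rescale (2 : K)) (bernoulliPowerSeries_mul_exp_sub_one K)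
  have hexp : PowerSeries.rescale (2 : K) (PowerSeries.exp K) = PowerSeries.exp K ^ 2 := by
    rw [PowerSeries.exp_pow_eq_rescale_exp, Nat.cast_ofNat]
  rw [map_mul, map_sub, map_one, PowerSeries.rescale_X, hexp, map_ofNat] at h
  rw [zCothSeries]
  linear_combination h

theorem X_mul_derivative_zCothSeries :
    PowerSeries.X * d⁄dX K (zCothSeries K) =
      zCothSeries K - zCothSeries K ^ 2 + PowerSeries.X ^ 2 := by
  have hE := zCothSeries_mul_exp_sq_sub_one (K := K)
  have hdE := congrArg (d⁄dX K) hE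
  simp only [Derivation.leibniz, Derivation.leibniz_pow, PowerSeries.derivative_exp, map_sub,
    map_add, Derivation.map_one_eq_zero, PowerSeries.derivative_X, smul_eq_mul] at hdE
  have hne : PowerSeries.exp K ^ 2 - 1 ≠ 0 := by
    intro h
    simpa [PowerSeries.exp_pow_eq_rescale_exp] using congrArg (PowerSeries.coeff 1) h
  refine mul_right_cancel₀ hne ?_
  linear_combination (PowerSeries.X : K⟦X⟧) * hdE + (zCothSeries K - 1 - PowerSeries.X) * hE

theorem X_mul_derivative_derivative_zCothSeries :
    PowerSeries.X * d⁄dX K (d⁄dX K (zCothSeries K)) + 2 * zCothSeries K * d⁄dX K (zCothSeries K) =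
      2 * PowerSeries.X := by
  have h := congrArg (d⁄dX K) (X_mul_derivative_zCothSeries (K := K))
  simp [Derivation.leibniz] at h
  linear_combination h

theorem constantCoeff_tanhSeries : PowerSeries.constantCoeff (tanhSeries K) = 0 := by
  simp [tanhSeries]

theorem inv_zCothSeries_mul_self : (zCothSeries K)⁻¹ * zCothSeries K = 1 :=
  PowerSeries.inv_mul_cancel _ (by simp [constantCoeff_zCothSeries])

theorem tanhSeries_mul_zCothSeries : tanhSeries K * zCothSeries K = PowerSeries.X := by
  rw [tanhSeries, mul_assoc, inv_zCothSeries_mul_self, mul_one]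

theorem derivative_tanhSeries : d⁄dX K (tanhSeries K) = 1 - tanhSeries K ^ 2 := by
  simp only [tanhSeries, Derivation.leibniz, PowerSeries.derivative_inv', PowerSeries.derivative_X]
  linear_combination (-(zCothSeries K)⁻¹ ^ 2) * X_mul_derivative_zCothSeries (K := K)
    + ((zCothSeries K)⁻¹ * zCothSeries K + 1 - (zCothSeries K)⁻¹) *
      inv_zCothSeries_mul_self (K := K)

end CothSeries

def integralNegOneOne : ℝ[X] →ₗ[ℝ] ℝ where
  toFun p := ∫ x in (-1 : ℝ)..1, p.eval x
  map_add' p q := by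
    simp only [eval_add]
    exact intervalIntegral.integral_add (p.continuous.intervalIntegrable _ _)
      (q.continuous.intervalIntegrable _ _)
  map_smul' c p := by simp

theorem integralNegOneOne_apply (p : ℝ[X]) :
    integralNegOneOne p = ∫ x in (-1 : ℝ)..1, p.eval x := rfl

theorem integralNegOneOne_one : integralNegOneOne 1 = 2 := by
  norm_num [integralNegOneOne_apply]

theorem integralNegOneOne_X : integralNegOneOne X = 0 := by
  norm_num [integralNegOneOne_apply]

theorem integralNegOneOne_derivative (p : ℝ[X]) :
    integralNegOneOne (derivative p) = p.eval 1 - p.eval (-1) :=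
  intervalIntegral.integral_eq_sub_of_hasDerivAt (fun x _ => p.hasDerivAt x)
    (p.derivative.continuous.intervalIntegrable _ _)

theorem integralNegOneOne_one_sub_X_sq_mul_derivative (p : ℝ[X]) :
    integralNegOneOne ((1 - X ^ 2) * derivative p) = 2 * integralNegOneOne (X * p) := by
  have h := integralNegOneOne_derivative ((1 - X ^ 2) * p)
  simp only [derivative_mul, derivative_sub, derivative_one, derivative_X_pow, map_add] at h
  norm_num [mul_assoc, ← smul_eq_C_mul] at h
  linarith

def egfT : ℝ[X]⟦X⟧ :=
  PowerSeries.mk fun n => (n.factorial : ℝ)⁻¹ • (T n).map (algebraMap ℚ ℝ)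

theorem coeff_egfT (n : ℕ) :
    PowerSeries.coeff n egfT = (n.factorial : ℝ)⁻¹ • (T n).map (algebraMap ℚ ℝ) :=
  PowerSeries.coeff_mk _ _

theorem constantCoeff_egfT : PowerSeries.constantCoeff egfT = X := by
  rw [← PowerSeries.coeff_zero_eq_constantCoeff_apply, coeff_egfT]
  simp [T]

theorem derivative_egfT :
    d⁄dX ℝ[X] egfT = PowerSeries.C (1 - X ^ 2) * derivativeCoeffwise ℝ egfT := by
  ext n : 1
  have hfac : ((n + 1).factorial : ℝ)⁻¹ * (n + 1) = (n.factorial : ℝ)⁻¹ := by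
    rw [Nat.factorial_succ]
    push_cast
    field_simp
  rw [PowerSeries.coeff_derivative, PowerSeries.coeff_C_mul, coeff_derivativeCoeffwise,
    coeff_egfT, coeff_egfT, T, derivative_smul, smul_eq_C_mul, smul_eq_C_mul, ← hfac]
  simp only [Polynomial.map_mul, Polynomial.map_sub, Polynomial.map_one, Polynomial.map_pow,
    Polynomial.map_X, Polynomial.derivative_map, map_mul, map_add, map_natCast, map_one]
  ring

theorem egfT_mul_one_add :
    egfT * (1 + PowerSeries.C X * PowerSeries.map (algebraMap ℝ ℝ[X]) (tanhSeries ℝ)) =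
      PowerSeries.C X + PowerSeries.map (algebraMap ℝ ℝ[X]) (tanhSeries ℝ) := by
  set t := PowerSeries.map (algebraMap ℝ ℝ[X]) (tanhSeries ℝ)
  have ht : d⁄dX ℝ[X] t = 1 - t ^ 2 := by
    rw [PowerSeries.derivative_map, derivative_tanhSeries]
    simp [t]
  have ht₀ : PowerSeries.constantCoeff t = 0 := by
    rw [← PowerSeries.coeff_zero_eq_constantCoeff_apply, PowerSeries.coeff_map,
      PowerSeries.coeff_zero_eq_constantCoeff_apply, constantCoeff_tanhSeries, map_zero]
  have hDt : derivativeCoeffwise ℝ t = 0 := derivativeCoeffwise_map_algebraMap _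
  have hDX : derivativeCoeffwise ℝ (PowerSeries.C X) = 1 := by
    simp [derivativeCoeffwise_C]
  rw [← sub_eq_zero]
  apply eq_zero_of_derivative_eq_transport (q := 1 - X ^ 2) (A := PowerSeries.C X - t)
  · simp only [map_sub, map_add, Derivation.leibniz, smul_eq_mul, Derivation.map_one_eq_zero,
      PowerSeries.derivative_C, map_one, map_pow, ht, hDt, hDX, derivative_egfT]
    ring
  · simp [ht₀, constantCoeff_egfT]

def integralEgfT : ℝ⟦X⟧ := coeffwise integralNegOneOne egfT

theorem derivative_integralEgfT :
    d⁄dX ℝ integralEgfT = 2 * coeffwise integralNegOneOne (PowerSeries.C X * egfT) := by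
  ext n : 1
  rw [integralEgfT, ← coeffwise_derivative, derivative_egfT, coeff_coeffwise,
    PowerSeries.coeff_C_mul, coeff_derivativeCoeffwise,
    integralNegOneOne_one_sub_X_sq_mul_derivative, ← map_ofNat PowerSeries.C 2,
    PowerSeries.coeff_C_mul, coeff_coeffwise, PowerSeries.coeff_C_mul]

theorem integralEgfT_add_tanhSeries_mul :
    integralEgfT + tanhSeries ℝ * coeffwise integralNegOneOne (PowerSeries.C X * egfT) =
      2 * tanhSeries ℝ := by
  have h := congrArg (coeffwise integralNegOneOne) egfT_mul_one_add
  set t := PowerSeries.map (algebraMap ℝ ℝ[X]) (tanhSeries ℝ)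
  rw [show egfT * (1 + PowerSeries.C X * t) = egfT + t * (PowerSeries.C X * egfT) by ring,
    show PowerSeries.C X + t = PowerSeries.C X + t * 1 by ring, map_add, map_add,
    coeffwise_map_mul, coeffwise_map_mul, ← map_one PowerSeries.C, coeffwise_C, coeffwise_C,
    integralNegOneOne_X, integralNegOneOne_one, map_zero, map_ofNat] at h
  rw [integralEgfT]
  linear_combination h

theorem X_mul_derivative_integralEgfT :
    PowerSeries.X * d⁄dX ℝ integralEgfT + 2 * zCothSeries ℝ * integralEgfT =
      4 * PowerSeries.X := by
  linear_combination (2 * zCothSeries ℝ) * integralEgfT_add_tanhSeries_mul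
    + PowerSeries.X * derivative_integralEgfT
    + (4 - 2 * coeffwise integralNegOneOne (PowerSeries.C X * egfT)) *
      tanhSeries_mul_zCothSeries (K := ℝ)

theorem integralEgfT_eq : integralEgfT = 2 * d⁄dX ℝ (zCothSeries ℝ) := by
  rw [← sub_eq_zero]
  refine eq_zero_of_X_mul_derivative_add_mul_eq_zero (a := 2 * zCothSeries ℝ) (fun n => ?_) ?_
  · rw [map_mul, constantCoeff_zCothSeries, map_ofNat]
    positivity
  · have h2 : d⁄dX ℝ (2 : ℝ⟦X⟧) = 0 := by simpa using (d⁄dX ℝ).map_natCast 2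
    simp only [map_sub, Derivation.leibniz, smul_eq_mul, h2]
    linear_combination
      X_mul_derivative_integralEgfT - 2 * X_mul_derivative_derivative_zCothSeries (K := ℝ)

theorem integral_aeval_T_succ (n : ℕ) :
    ∫ x in (-1 : ℝ)..1, (Polynomial.aeval x (T (n + 1)) : ℝ) =
      2 ^ (n + 3) * (bernoulli (n + 2) : ℝ) := by
  have h := congrArg (PowerSeries.coeff (n + 1)) integralEgfT_eq
  rw [integralEgfT, coeff_coeffwise, coeff_egfT, map_smul, ← map_ofNat PowerSeries.C 2,
    PowerSeries.coeff_C_mul, PowerSeries.coeff_derivative, coeff_zCothSeries_add_two,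
    integralNegOneOne_apply, Nat.factorial_succ (n + 1), smul_eq_mul] at h
  simp_rw [eval_map_algebraMap] at h
  push_cast at h
  field_simp at h
  linear_combination h

end

theorem integral_T_generating_identity :
    (∀ z : ℝ, z ≠ 0 → |z| < Real.pi →
      ∑' n : ℕ, (∫ x in (-1 : ℝ)..1, (Polynomial.aeval x (T (2 * n + 1)) : ℝ)) *
          z ^ (2 * n + 1) / (Nat.factorial (2 * n + 1)) =
        4 * ∑' n : ℕ, ((n : ℝ) + 1) *
          ((2 : ℝ) ^ (2 * n + 2) * (bernoulli (2 * n + 2) : ℝ) / (Nat.factorial (2 * n + 2))) *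
            z ^ (2 * n + 1)) ∧
    (∀ n : ℕ, 1 ≤ n →
      ∫ x in (-1 : ℝ)..1, (Polynomial.aeval x (T (2 * n - 1)) : ℝ) =
        2 ^ (2 * n + 1) * (bernoulli (2 * n) : ℝ)) := by
  refine ⟨fun z _ _ => ?_, fun n hn => ?_⟩
  · rw [← tsum_mul_left]
    refine tsum_congr fun n => ?_
    rw [integral_aeval_T_succ, Nat.factorial_succ (2 * n + 1)]
    push_cast
    field_simp
    ring
  · obtain ⟨m, rfl⟩ := Nat.exists_eq_add_of_le' hn
    rw [show 2 * (m + 1) - 1 = 2 * m + 1 by omega, integral_aeval_T_succ]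
    ring_nf
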